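/- arXiv:2307.03092 — 2 statements merged into one kernel-verified Lean document; each statement's English description precedes it below -/
import Mathlib

section
/- Let (E, A) be a regular pair with Weierstrass form via P, Q as above, ν = ind(E,A), f ∈ C^ν([0,T], ℝⁿ), B = B̃Q^{−1}, C = C̃Q^{−1} with B̃, C̃ of the block form [B̃₁ B̃₂; 0 0], [C̃₁ C̃₂; 0 0], and d = (d₁, 0)ᵀ. If D̃ = B̃₁ + C̃₁ + C̃₁ J ∫₀ᵀ e^{(T−s)J} ds is invertible, then the boundary value problem Eẋ = Ax + f on (0,T), Bx(0) + Cx(T) = d, has the unique solution x(t) = Q(μ̃ + ũ(t)), where (μ̃, ũ) is given by the explicit formulas μ̃₁ = D̃^{−1}d̃, ũ₁(t) = ∫₀ᵗ e^{(t−s)J}ds·J D̃^{−1}d̃ + ∫₀ᵗ e^{(t−s)J} f̃₁(s)ds, μ̃₂ = −Σ_{i=0}^{ν−1} Nⁱ f̃₂^{(i)}(0), ũ₂(t) = −Σ_{i=0}^{ν−1} Nⁱ[f̃₂^{(i)}(t) − f̃₂^{(i)}(0)]. -/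
/-!
Multiplying `E ẋ = A x + f` by `P` and substituting `x = Q y` decouples it into the ODE
`ẏ₁ = J y₁ + f̃₁` and the nilpotent system `N ẏ₂ = y₂ + f̃₂`. The ODE is solved uniquely from
`y₁(0)` by variation of constants (differentiate `s ↦ e^{(t-s)J} y₁(s)`). The nilpotent system has
the unique solution `y₂ = -∑ Nⁱ f̃₂⁽ⁱ⁾`: the difference `e` of two solutions satisfies `N ė = e`,
and `Nᵏ e = 0` follows by descending induction from `k = ν`, since `Nᵏ e` is the derivative of
`Nᵏ⁺¹ e`. So only `y₁(0)` is free, and because `J ∫₀ᵀ e^{(T-s)J} ds = e^{TJ} - 1` the boundary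
condition becomes `D̃ y₁(0) = d̃`.
-/

open Matrix Set

/-- The matrix `∫₀ᵗ e^{(t−s)J} ds`, computed entrywise. -/
noncomputable def expInt {n : ℕ} (J : Matrix (Fin n) (Fin n) ℝ) (t : ℝ) :
    Matrix (Fin n) (Fin n) ℝ :=
  Matrix.of fun i j => ∫ s in (0:ℝ)..t, NormedSpace.exp ((t - s) • J) i j

section MulVecCalculus

variable {m n : Type*} [Fintype m] [Fintype n] {t : ℝ}

-- `Matrix` carries no norm instance. The operator norm is opened only inside proofs, so that
-- statements keep the default topology and module structure on matrices (defeq to, but not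
-- syntactically, the ones the norm induces).
theorem HasDerivAt.matrix_mulVec {M : ℝ → Matrix m n ℝ} {M' : Matrix m n ℝ}
    {v : ℝ → n → ℝ} {v' : n → ℝ} (hM : HasDerivAt M M' t) (hv : HasDerivAt v v' t) :
    HasDerivAt (fun u => M u *ᵥ v u) (M t *ᵥ v' + M' *ᵥ v t) t := by
  open scoped Matrix.Norms.Operator in
  exact (LinearMap.toContinuousLinearMap
    (LinearMap.toContinuousLinearMap.toLinearMap ∘ₗ Matrix.mulVecBilin ℝ ℝ) :
      Matrix m n ℝ →L[ℝ] (n → ℝ) →L[ℝ] m → ℝ).hasDerivAt_of_bilinear (fun _ => hM) (fun _ => hv)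

theorem HasDerivWithinAt.const_mulVec (M : Matrix m n ℝ) {v : ℝ → n → ℝ} {v' : n → ℝ}
    {s : Set ℝ} (hv : HasDerivWithinAt v v' s t) :
    HasDerivWithinAt (fun u => M *ᵥ v u) (M *ᵥ v') s t :=
  (Matrix.mulVecLin M).toContinuousLinearMap.hasFDerivAt.comp_hasDerivWithinAt t hv

theorem Matrix.mulVec_intervalIntegral (M : Matrix m n ℝ) {v : ℝ → n → ℝ} {a b : ℝ}
    (hv : IntervalIntegrable v MeasureTheory.volume a b) :
    M *ᵥ ∫ s in a..b, v s = ∫ s in a..b, M *ᵥ v s :=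
  ((Matrix.mulVecLin M).toContinuousLinearMap.intervalIntegral_comp_comm hv).symm

end MulVecCalculus

theorem ContDiffOn.mulVec_comp {m n κ : Type*} [Fintype n] [Fintype κ] {k : WithTop ℕ∞}
    {f : ℝ → n → ℝ} {s : Set ℝ} (hf : ContDiffOn ℝ k f s) (M : Matrix m n ℝ) (σ : κ → m) :
    ContDiffOn ℝ k (fun t => (M *ᵥ f t) ∘ σ) s :=
  (LinearMap.funLeft ℝ ℝ σ ∘ₗ M.mulVecLin).toContinuousLinearMap.contDiff.comp_contDiffOn hf

theorem ContinuousOn.exists_continuous_eqOn_Icc {X : Type*} [TopologicalSpace X] {f : ℝ → X}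
    {a b : ℝ} (hab : a ≤ b) (hf : ContinuousOn f (Icc a b)) :
    ∃ g : ℝ → X, Continuous g ∧ EqOn g f (Icc a b) :=
  ⟨IccExtend hab ((Icc a b).domRestrict f), continuous_IccExtend_iff.2 hf.domRestrict,
    fun _ ht => IccExtend_of_mem hab _ ht⟩

section MatrixExp

variable {ι : Type*} [Fintype ι] [DecidableEq ι] (J : Matrix ι ι ℝ)

theorem Matrix.exp_add_smul (a b : ℝ) :
    NormedSpace.exp ((a + b) • J) = NormedSpace.exp (a • J) * NormedSpace.exp (b • J) := by
  rw [add_smul]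
  exact Matrix.exp_add_of_commute _ _ (((Commute.refl J).smul_left a).smul_right b)

theorem Matrix.commute_exp_smul (t : ℝ) : Commute J (NormedSpace.exp (t • J)) := by
  open scoped Matrix.Norms.Operator in
  exact ((Commute.refl J).smul_right t).exp_right

theorem Matrix.continuous_exp_smul : Continuous fun t : ℝ => NormedSpace.exp (t • J) := by
  open scoped Matrix.Norms.Operator in
  exact NormedSpace.exp_continuous.comp (continuous_id.smul continuous_const)

theorem Matrix.continuous_exp_sub_smul (t : ℝ) :
    Continuous fun s : ℝ => NormedSpace.exp ((t - s) • J) :=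
  (Matrix.continuous_exp_smul J).comp (continuous_const.sub continuous_id)

theorem Matrix.hasDerivAt_exp_smul (t : ℝ) :
    HasDerivAt (fun t : ℝ => NormedSpace.exp (t • J)) (J * NormedSpace.exp (t • J)) t := by
  open scoped Matrix.Norms.Operator in
  exact hasDerivAt_exp_smul_const' J t

theorem Matrix.hasDerivAt_exp_sub_smul (t s : ℝ) :
    HasDerivAt (fun s : ℝ => NormedSpace.exp ((t - s) • J))
      (-(J * NormedSpace.exp ((t - s) • J))) s := by
  open scoped Matrix.Norms.Operator in
  have h := (hasDerivAt_exp_smul_const' J (t - s)).scomp s ((hasDerivAt_id s).const_sub t)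
  simp only [neg_smul, one_smul] at h
  exact h

end MatrixExp

section ExpIntegral

variable {n : ℕ} (J : Matrix (Fin n) (Fin n) ℝ)

open scoped Matrix.Norms.Operator in
theorem expInt_eq_integral (t : ℝ) :
    expInt J t = ∫ s in (0:ℝ)..t, NormedSpace.exp ((t - s) • J) := by
  ext i j
  exact (Matrix.entryLinearMap ℝ ℝ i j).toContinuousLinearMap.intervalIntegral_comp_comm
    ((Matrix.continuous_exp_sub_smul J t).intervalIntegrable _ _)

open scoped Matrix.Norms.Operator in
theorem mul_expInt (t : ℝ) : J * expInt J t = NormedSpace.exp (t • J) - 1 := by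
  have hexp := Matrix.continuous_exp_sub_smul J t
  have h := (ContinuousLinearMap.mul ℝ _ J).intervalIntegral_comp_comm
    (hexp.intervalIntegrable (μ := MeasureTheory.volume) 0 t)
  simp only [ContinuousLinearMap.mul_apply'] at h
  rw [expInt_eq_integral, ← h, intervalIntegral.integral_eq_sub_of_hasDerivAt
    (f := fun s => -NormedSpace.exp ((t - s) • J))
    (f' := fun s => J * NormedSpace.exp ((t - s) • J))
    (fun s _ => by simpa only [neg_neg] using (Matrix.hasDerivAt_exp_sub_smul J t s).fun_neg)
    ((continuous_const.mul hexp).intervalIntegrable _ _)]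
  simp [sub_eq_add_neg, add_comm]

open scoped Matrix.Norms.Operator in
theorem commute_expInt (t : ℝ) : Commute J (expInt J t) := by
  have hexp :=
    (Matrix.continuous_exp_sub_smul J t).intervalIntegrable (μ := MeasureTheory.volume) 0 t
  have hl := (ContinuousLinearMap.mul ℝ _ J).intervalIntegral_comp_comm hexp
  have hr := ((ContinuousLinearMap.mul ℝ _).flip J).intervalIntegral_comp_comm hexp
  simp only [ContinuousLinearMap.mul_apply', ContinuousLinearMap.flip_apply] at hl hr
  rw [Commute, SemiconjBy, expInt_eq_integral, ← hl, ← hr]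
  exact intervalIntegral.integral_congr fun s _ => (Matrix.commute_exp_smul J _).eq

end ExpIntegral

section Duhamel

variable {ι : Type*} [Fintype ι] [DecidableEq ι] (J : Matrix ι ι ℝ)

noncomputable def duhamel (g : ℝ → ι → ℝ) (μ : ι → ℝ) (t : ℝ) : ι → ℝ :=
  NormedSpace.exp (t • J) *ᵥ μ + ∫ s in (0:ℝ)..t, NormedSpace.exp ((t - s) • J) *ᵥ g s

@[simp]
theorem duhamel_zero (g : ℝ → ι → ℝ) (μ : ι → ℝ) : duhamel J g μ 0 = μ := by
  simp [duhamel]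

variable {J} {g : ℝ → ι → ℝ}

theorem duhamel_eq_exp_mulVec (hg : Continuous g) (μ : ι → ℝ) (t : ℝ) :
    duhamel J g μ t = NormedSpace.exp (t • J) *ᵥ
      (μ + ∫ s in (0:ℝ)..t, NormedSpace.exp ((-s) • J) *ᵥ g s) := by
  have hint : Continuous fun s => NormedSpace.exp ((-s) • J) *ᵥ g s :=
    ((Matrix.continuous_exp_smul J).comp continuous_neg).matrix_mulVec hg
  rw [duhamel, mulVec_add, Matrix.mulVec_intervalIntegral _ (hint.intervalIntegrable 0 t)]
  congr 1
  refine intervalIntegral.integral_congr fun s _ => ?_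
  rw [mulVec_mulVec, ← Matrix.exp_add_smul, sub_eq_add_neg]

theorem hasDerivAt_duhamel (hg : Continuous g) (μ : ι → ℝ) (t : ℝ) :
    HasDerivAt (duhamel J g μ) (J *ᵥ duhamel J g μ t + g t) t := by
  have hint : Continuous fun s => NormedSpace.exp ((-s) • J) *ᵥ g s :=
    ((Matrix.continuous_exp_smul J).comp continuous_neg).matrix_mulVec hg
  have hW := intervalIntegral.integral_hasDerivAt_right (hint.intervalIntegrable 0 t)
    hint.aestronglyMeasurable.stronglyMeasurableAtFilter hint.continuousAt
  have h := (Matrix.hasDerivAt_exp_smul J t).matrix_mulVec (hW.const_add μ)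
  rw [show duhamel J g μ = _ from funext (duhamel_eq_exp_mulVec hg μ)]
  convert h using 1
  dsimp only
  rw [mulVec_mulVec _ _ (NormedSpace.exp ((-t) • J)), ← Matrix.exp_add_smul, add_neg_cancel,
    zero_smul, NormedSpace.exp_zero, one_mulVec, mulVec_mulVec, add_comm]

theorem continuous_duhamel (hg : Continuous g) (μ : ι → ℝ) : Continuous (duhamel J g μ) :=
  continuous_iff_continuousAt.2 fun t => (hasDerivAt_duhamel hg μ t).continuousAt

theorem duhamel_eq_of_eqOn {g' : ℝ → ι → ℝ} {t : ℝ} (ht : 0 ≤ t) (h : EqOn g g' (Icc 0 t))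
    (μ : ι → ℝ) : duhamel J g μ t = duhamel J g' μ t := by
  rw [duhamel, duhamel, intervalIntegral.integral_congr fun s hs => ?_]
  rw [uIcc_of_le ht] at hs
  rw [h hs]

theorem eq_duhamel_of_hasDerivAt (hg : Continuous g) {y : ℝ → ι → ℝ} {T : ℝ}
    (hyc : ContinuousOn y (Icc 0 T)) (hy : ∀ t ∈ Ioo 0 T, HasDerivAt y (J *ᵥ y t + g t) t) :
    ∀ t ∈ Icc 0 T, y t = duhamel J g (y 0) t := by
  intro t ht
  have hw : ∀ s ∈ Ioo 0 t, HasDerivAt (fun s => NormedSpace.exp ((t - s) • J) *ᵥ y s)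
      (NormedSpace.exp ((t - s) • J) *ᵥ g s) s := by
    intro s hs
    convert (Matrix.hasDerivAt_exp_sub_smul J t s).matrix_mulVec
      (hy s ⟨hs.1, hs.2.trans_le ht.2⟩) using 1
    rw [mulVec_add, mulVec_mulVec, neg_mulVec, ← (Matrix.commute_exp_smul J _).eq, ← mulVec_mulVec]
    abel
  have hwc : ContinuousOn (fun s => NormedSpace.exp ((t - s) • J) *ᵥ y s) (Icc 0 t) :=
    (continuous_fst.matrix_mulVec continuous_snd).comp_continuousOn
      ((Matrix.continuous_exp_sub_smul J t).continuousOn.prodMk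
        (hyc.mono (Icc_subset_Icc_right ht.2)))
  rw [duhamel, intervalIntegral.integral_eq_sub_of_hasDerivAt_of_le ht.1 hwc hw
    (((Matrix.continuous_exp_sub_smul J t).matrix_mulVec hg).intervalIntegrable 0 t)]
  simp

end Duhamel

theorem duhamel_eq_add_expInt {n : ℕ} (J : Matrix (Fin n) (Fin n) ℝ) (g : ℝ → Fin n → ℝ)
    (μ : Fin n → ℝ) (t : ℝ) :
    duhamel J g μ t = μ + expInt J t *ᵥ (J *ᵥ μ)
      + ∫ s in (0:ℝ)..t, NormedSpace.exp ((t - s) • J) *ᵥ g s := by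
  rw [duhamel, mulVec_mulVec, ← (commute_expInt J t).eq, mul_expInt, sub_mulVec, one_mulVec]
  abel

section NilpotentSystem

variable {ι : Type*} [Fintype ι] [DecidableEq ι]

theorem Matrix.mulVec_sum_pow_mulVec_succ {R : Type*} [Ring R] {N : Matrix ι ι R} {ν : ℕ}
    (hN : N ^ ν = 0) (w : ℕ → ι → R) :
    N *ᵥ ∑ i ∈ Finset.range ν, N ^ i *ᵥ w (i + 1)
      = ∑ i ∈ Finset.range ν, N ^ i *ᵥ w i - w 0 := by
  have h := Finset.sum_range_succ' (fun i => N ^ i *ᵥ w i) ν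
  rw [Finset.sum_range_succ, hN, zero_mulVec, add_zero, pow_zero, one_mulVec] at h
  simp only [h, add_sub_cancel_right, mulVec_sum, mulVec_mulVec, pow_succ']

variable {N : Matrix ι ι ℝ} {ν : ℕ}

variable (N ν) in
noncomputable def nilpotentSol (g : ℝ → ι → ℝ) (s : Set ℝ) (t : ℝ) : ι → ℝ :=
  -∑ i ∈ Finset.range ν, N ^ i *ᵥ iteratedDerivWithin i g s t

variable {g : ℝ → ι → ℝ} {s : Set ℝ}

theorem hasDerivWithinAt_nilpotentSol (hs : UniqueDiffOn ℝ s) (hg : ContDiffOn ℝ ν g s)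
    {t : ℝ} (ht : t ∈ s) :
    HasDerivWithinAt (nilpotentSol N ν g s)
      (-∑ i ∈ Finset.range ν, N ^ i *ᵥ iteratedDerivWithin (i + 1) g s t) s t := by
  refine (HasDerivWithinAt.fun_sum fun i hi => HasDerivWithinAt.const_mulVec _ ?_).neg
  rw [iteratedDerivWithin_succ]
  exact ((hg.differentiableOn_iteratedDerivWithin (mod_cast Finset.mem_range.1 hi) hs) t
    ht).hasDerivWithinAt

theorem mulVec_nilpotentSol_deriv (hN : N ^ ν = 0) (t : ℝ) :
    N *ᵥ (-∑ i ∈ Finset.range ν, N ^ i *ᵥ iteratedDerivWithin (i + 1) g s t)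
      = nilpotentSol N ν g s t + g t := by
  rw [mulVec_neg, Matrix.mulVec_sum_pow_mulVec_succ hN (fun i => iteratedDerivWithin i g s t),
    iteratedDerivWithin_zero, nilpotentSol]
  abel

theorem pow_mulVec_eq_zero_of_succ {e e' : ℝ → ι → ℝ} (hs : IsOpen s)
    (he : ∀ t ∈ s, HasDerivAt e (e' t) t) (hNe : ∀ t ∈ s, N *ᵥ e' t = e t) {k : ℕ}
    (hk : ∀ t ∈ s, N ^ (k + 1) *ᵥ e t = 0) : ∀ t ∈ s, N ^ k *ᵥ e t = 0 := by
  intro t ht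
  have hderiv : HasDerivAt (fun u => N ^ (k + 1) *ᵥ e u) (N ^ k *ᵥ e t) t := by
    rw [← hNe t ht, mulVec_mulVec, ← pow_succ]
    exact hasDerivWithinAt_univ.1 ((he t ht).hasDerivWithinAt.const_mulVec _)
  exact hderiv.unique ((hasDerivAt_const t 0).congr_of_eventuallyEq
    (Filter.eventuallyEq_of_mem (hs.mem_nhds ht) hk))

theorem eq_zero_of_nilpotent_mulVec_deriv {e e' : ℝ → ι → ℝ} (hs : IsOpen s) (hN : N ^ ν = 0)
    (he : ∀ t ∈ s, HasDerivAt e (e' t) t) (hNe : ∀ t ∈ s, N *ᵥ e' t = e t) :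
    ∀ t ∈ s, e t = 0 := by
  have h : ∀ t ∈ s, N ^ 0 *ᵥ e t = 0 :=
    Nat.decreasingInduction (motive := fun k _ => ∀ t ∈ s, N ^ k *ᵥ e t = 0)
      (fun k _ hk => pow_mulVec_eq_zero_of_succ hs he hNe hk) (by simp [hN]) (Nat.zero_le ν)
  simpa using h

theorem eqOn_nilpotentSol {a b : ℝ} (hab : a < b) (hN : N ^ ν = 0)
    (hg : ContDiffOn ℝ ν g (Icc a b)) {y y' : ℝ → ι → ℝ} (hyc : ContinuousOn y (Icc a b))
    (hy : ∀ t ∈ Ioo a b, HasDerivAt y (y' t) t) (hNy : ∀ t ∈ Ioo a b, N *ᵥ y' t = y t + g t) :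
    EqOn y (nilpotentSol N ν g (Icc a b)) (Icc a b) := by
  have hsol := fun t (ht : t ∈ Icc a b) =>
    hasDerivWithinAt_nilpotentSol (N := N) (uniqueDiffOn_Icc hab) hg ht
  have he : ∀ t ∈ Ioo a b, y t - nilpotentSol N ν g (Icc a b) t = 0 := by
    refine eq_zero_of_nilpotent_mulVec_deriv isOpen_Ioo hN
      (fun t ht => (hy t ht).sub ((hsol t (Ioo_subset_Icc_self ht)).hasDerivAt
        (Icc_mem_nhds ht.1 ht.2))) fun t ht => ?_
    rw [mulVec_sub, hNy t ht, mulVec_nilpotentSol_deriv hN]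
    abel
  refine EqOn.of_subset_closure (fun t ht => sub_eq_zero.1 (he t ht)) hyc
    (fun t ht => (hsol t ht).continuousWithinAt) Ioo_subset_Icc_self (closure_Ioo hab.ne).ge
end NilpotentSystem

section WeierstrassForm

variable {ι₁ ι₂ : Type*}

theorem hasDerivWithinAt_pi_sum_iff {y : ℝ → ι₁ ⊕ ι₂ → ℝ} {y' : ι₁ ⊕ ι₂ → ℝ} {s : Set ℝ} {t : ℝ} :
    HasDerivWithinAt y y' s t ↔ HasDerivWithinAt (fun u => y u ∘ Sum.inl) (y' ∘ Sum.inl) s t ∧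
      HasDerivWithinAt (fun u => y u ∘ Sum.inr) (y' ∘ Sum.inr) s t := by
  simp only [hasDerivWithinAt_pi, Sum.forall, Function.comp_apply]

theorem continuousOn_pi_sum_iff {y : ℝ → ι₁ ⊕ ι₂ → ℝ} {s : Set ℝ} :
    ContinuousOn y s ↔ ContinuousOn (fun u => y u ∘ Sum.inl) s ∧
      ContinuousOn (fun u => y u ∘ Sum.inr) s := by
  simp only [continuousOn_pi, Sum.forall, Function.comp_apply]

variable [Fintype ι₁] [Fintype ι₂] [DecidableEq ι₁] [DecidableEq ι₂]
  {E A P Q : Matrix (ι₁ ⊕ ι₂) (ι₁ ⊕ ι₂) ℝ} {J : Matrix ι₁ ι₁ ℝ} {N : Matrix ι₂ ι₂ ℝ}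

theorem mulVec_eq_iff_of_weierstrass (hP : IsUnit P.det) (hE : P * E * Q = fromBlocks 1 0 0 N)
    (hA : P * A * Q = fromBlocks J 0 0 1) (v y f : ι₁ ⊕ ι₂ → ℝ) :
    E *ᵥ (Q *ᵥ v) = A *ᵥ (Q *ᵥ y) + f ↔
      v ∘ Sum.inl = J *ᵥ (y ∘ Sum.inl) + (P *ᵥ f) ∘ Sum.inl ∧
        N *ᵥ (v ∘ Sum.inr) = y ∘ Sum.inr + (P *ᵥ f) ∘ Sum.inr := by
  rw [← (mulVec_injective_iff_isUnit.2 ((isUnit_iff_isUnit_det P).2 hP)).eq_iff, mulVec_add,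
    mulVec_mulVec, mulVec_mulVec, mulVec_mulVec, mulVec_mulVec, hE, hA, fromBlocks_mulVec,
    fromBlocks_mulVec, ← Sum.elim_comp_inl_inr (P *ᵥ f)]
  simp [funext_iff]

theorem fromBlocks_mul_inv_mulVec_add_eq_iff {κ₁ κ₂ : Type*} (hQ : IsUnit Q.det)
    (B₁ C₁ : Matrix κ₁ ι₁ ℝ) (B₂ C₂ : Matrix κ₁ ι₂ ℝ) (a a' : ι₁ → ℝ) (b b' : ι₂ → ℝ)
    (d₁ : κ₁ → ℝ) :
    (fromBlocks B₁ B₂ (0 : Matrix κ₂ ι₁ ℝ) 0 * Q⁻¹) *ᵥ (Q *ᵥ Sum.elim a b)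
        + (fromBlocks C₁ C₂ 0 0 * Q⁻¹) *ᵥ (Q *ᵥ Sum.elim a' b') = Sum.elim d₁ 0 ↔
      B₁ *ᵥ a + B₂ *ᵥ b + (C₁ *ᵥ a' + C₂ *ᵥ b') = d₁ := by
  simp only [mulVec_mulVec, Matrix.mul_assoc, nonsing_inv_mul Q hQ, Matrix.mul_one,
    fromBlocks_mulVec, zero_mulVec, add_zero, ← Sum.elim_add_add, Sum.elim_eq_iff, and_true,
    Sum.elim_comp_inl, Sum.elim_comp_inr]

variable {T : ℝ} {ν : ℕ} {g₁ : ℝ → ι₁ → ℝ} {g₂ : ℝ → ι₂ → ℝ} {f : ℝ → ι₁ ⊕ ι₂ → ℝ}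

theorem exists_hasDerivWithinAt_of_weierstrass (hP : IsUnit P.det)
    (hE : P * E * Q = fromBlocks 1 0 0 N) (hA : P * A * Q = fromBlocks J 0 0 1) (hT : 0 < T)
    (hN : N ^ ν = 0) (hg₁ : Continuous g₁) (hg₂ : ContDiffOn ℝ ν g₂ (Icc 0 T))
    (hf : ∀ t ∈ Ioo 0 T, P *ᵥ f t = Sum.elim (g₁ t) (g₂ t)) (μ : ι₁ → ℝ) :
    ∃ v : ℝ → ι₁ ⊕ ι₂ → ℝ, ContinuousOn v (Icc 0 T) ∧
      (∀ t ∈ Icc 0 T, HasDerivWithinAt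
        (fun t => Q *ᵥ Sum.elim (duhamel J g₁ μ t) (nilpotentSol N ν g₂ (Icc 0 T) t))
        (v t) (Icc 0 T) t) ∧
      ∀ t ∈ Ioo 0 T, E *ᵥ v t =
        A *ᵥ (Q *ᵥ Sum.elim (duhamel J g₁ μ t) (nilpotentSol N ν g₂ (Icc 0 T) t)) + f t := by
  have hs : UniqueDiffOn ℝ (Icc 0 T) := uniqueDiffOn_Icc hT
  set w : ℝ → ι₂ → ℝ := fun t =>
    -∑ i ∈ Finset.range ν, N ^ i *ᵥ iteratedDerivWithin (i + 1) g₂ (Icc 0 T) t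
  have hwc : ContinuousOn w (Icc 0 T) :=
    (continuousOn_finsetSum _ fun i hi =>
      (continuous_const.matrix_mulVec continuous_id).comp_continuousOn
        (hg₂.continuousOn_iteratedDerivWithin (mod_cast Finset.mem_range.1 hi) hs)).neg
  refine ⟨fun t => Q *ᵥ Sum.elim (J *ᵥ duhamel J g₁ μ t + g₁ t) (w t), ?_, fun t ht => ?_,
    fun t ht => ?_⟩
  · exact (continuous_const.matrix_mulVec continuous_id).comp_continuousOn
      (continuousOn_pi_sum_iff.2
        ⟨((continuous_const.matrix_mulVec (continuous_duhamel hg₁ μ)).add hg₁).continuousOn, hwc⟩)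
  · exact HasDerivWithinAt.const_mulVec Q (hasDerivWithinAt_pi_sum_iff.2
      ⟨(hasDerivAt_duhamel hg₁ μ t).hasDerivWithinAt, hasDerivWithinAt_nilpotentSol hs hg₂ ht⟩)
  · rw [mulVec_eq_iff_of_weierstrass hP hE hA, hf t ht]
    exact ⟨rfl, mulVec_nilpotentSol_deriv hN t⟩

theorem eqOn_of_weierstrass (hP : IsUnit P.det) (hQ : IsUnit Q.det)
    (hE : P * E * Q = fromBlocks 1 0 0 N) (hA : P * A * Q = fromBlocks J 0 0 1) (hT : 0 < T)
    (hN : N ^ ν = 0) (hg₁ : Continuous g₁) (hg₂ : ContDiffOn ℝ ν g₂ (Icc 0 T))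
    (hf : ∀ t ∈ Ioo 0 T, P *ᵥ f t = Sum.elim (g₁ t) (g₂ t)) {x x' : ℝ → ι₁ ⊕ ι₂ → ℝ}
    (hx : ∀ t ∈ Icc 0 T, HasDerivWithinAt x (x' t) (Icc 0 T) t)
    (hode : ∀ t ∈ Ioo 0 T, E *ᵥ x' t = A *ᵥ x t + f t) :
    EqOn x (fun t => Q *ᵥ Sum.elim (duhamel J g₁ ((Q⁻¹ *ᵥ x 0) ∘ Sum.inl) t)
      (nilpotentSol N ν g₂ (Icc 0 T) t)) (Icc 0 T) := by
  have hQQ : ∀ v, Q *ᵥ (Q⁻¹ *ᵥ v) = v := fun v => by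
    rw [mulVec_mulVec, mul_nonsing_inv Q hQ, one_mulVec]
  set y₁ : ℝ → ι₁ → ℝ := fun t => (Q⁻¹ *ᵥ x t) ∘ Sum.inl
  set y₂ : ℝ → ι₂ → ℝ := fun t => (Q⁻¹ *ᵥ x t) ∘ Sum.inr
  have hxy : ∀ t, x t = Q *ᵥ Sum.elim (y₁ t) (y₂ t) := fun t => by
    rw [Sum.elim_comp_inl_inr, hQQ]
  have hy : ∀ t ∈ Icc 0 T, HasDerivWithinAt y₁ ((Q⁻¹ *ᵥ x' t) ∘ Sum.inl) (Icc 0 T) t ∧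
      HasDerivWithinAt y₂ ((Q⁻¹ *ᵥ x' t) ∘ Sum.inr) (Icc 0 T) t := fun t ht =>
    hasDerivWithinAt_pi_sum_iff.1 ((hx t ht).const_mulVec Q⁻¹)
  have hy' : ∀ t ∈ Ioo 0 T, HasDerivAt y₁ ((Q⁻¹ *ᵥ x' t) ∘ Sum.inl) t ∧
      HasDerivAt y₂ ((Q⁻¹ *ᵥ x' t) ∘ Sum.inr) t := fun t ht =>
    (hy t (Ioo_subset_Icc_self ht)).imp (·.hasDerivAt (Icc_mem_nhds ht.1 ht.2))
      (·.hasDerivAt (Icc_mem_nhds ht.1 ht.2))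
  have hblocks : ∀ t ∈ Ioo 0 T, (Q⁻¹ *ᵥ x' t) ∘ Sum.inl = J *ᵥ y₁ t + g₁ t ∧
      N *ᵥ ((Q⁻¹ *ᵥ x' t) ∘ Sum.inr) = y₂ t + g₂ t := fun t ht => by
    have h := hode t ht
    rwa [← hQQ (x' t), ← hQQ (x t), mulVec_eq_iff_of_weierstrass hP hE hA, hf t ht] at h
  have h₁ := eq_duhamel_of_hasDerivAt hg₁ (fun t ht => (hy t ht).1.continuousWithinAt)
    fun t ht => (hblocks t ht).1 ▸ (hy' t ht).1
  have h₂ := eqOn_nilpotentSol hT hN hg₂ (fun t ht => (hy t ht).2.continuousWithinAt)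
    (fun t ht => (hy' t ht).2) fun t ht => (hblocks t ht).2
  intro t ht
  rw [hxy t, h₁ t ht, h₂ ht]

end WeierstrassForm

theorem boundary_eq_iff_of_weierstrass {n : ℕ} {ι₂ κ : Type*} [Fintype ι₂] [DecidableEq ι₂]
    {Q : Matrix (Fin n ⊕ ι₂) (Fin n ⊕ ι₂) ℝ} (hQ : IsUnit Q.det)
    (B₁ C₁ J : Matrix (Fin n) (Fin n) ℝ)
    (B₂ C₂ : Matrix (Fin n) ι₂ ℝ) (g : ℝ → Fin n → ℝ) (T : ℝ) (a d₁ : Fin n → ℝ)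
    (b₀ b_T : ι₂ → ℝ) :
    (fromBlocks B₁ B₂ (0 : Matrix κ (Fin n) ℝ) 0 * Q⁻¹) *ᵥ (Q *ᵥ Sum.elim a (-b₀))
        + (fromBlocks C₁ C₂ 0 0 * Q⁻¹) *ᵥ (Q *ᵥ Sum.elim (duhamel J g a T) (-b_T))
        = Sum.elim d₁ 0 ↔
      (B₁ + C₁ + C₁ * J * expInt J T) *ᵥ a
        = d₁ - C₁ *ᵥ (∫ s in (0:ℝ)..T, NormedSpace.exp ((T - s) • J) *ᵥ g s)
          + B₂ *ᵥ b₀ + C₂ *ᵥ b_T := by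
  rw [fromBlocks_mul_inv_mulVec_add_eq_iff hQ, ← sub_eq_zero,
    ← sub_eq_zero (a := (B₁ + C₁ + C₁ * J * expInt J T) *ᵥ a)]
  refine iff_of_eq (congrArg (· = 0) ?_)
  rw [duhamel_eq_add_expInt, add_mulVec, add_mulVec, Matrix.mul_assoc, (commute_expInt J T).eq,
    ← mulVec_mulVec, ← mulVec_mulVec]
  simp only [mulVec_add, mulVec_neg]
  abel

theorem stmt_13_general {n₁ n₂ : ℕ}
    (E A P Q : Matrix (Fin n₁ ⊕ Fin n₂) (Fin n₁ ⊕ Fin n₂) ℝ)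
    (hP : IsUnit P.det) (hQ : IsUnit Q.det)
    (N : Matrix (Fin n₂) (Fin n₂) ℝ) (J : Matrix (Fin n₁) (Fin n₁) ℝ)
    (hE : P * E * Q = Matrix.fromBlocks 1 0 0 N)
    (hA : P * A * Q = Matrix.fromBlocks J 0 0 1)
    (ν : ℕ) (hN : N ^ ν = 0)
    (T : ℝ) (hT : 0 < T)
    (f : ℝ → (Fin n₁ ⊕ Fin n₂) → ℝ) (hf : ContDiffOn ℝ (ν : ℕ∞) f (Icc 0 T))
    (f₁ : ℝ → Fin n₁ → ℝ) (hf₁ : f₁ = fun t i => (P *ᵥ f t) (Sum.inl i))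
    (f₂ : ℝ → Fin n₂ → ℝ) (hf₂ : f₂ = fun t j => (P *ᵥ f t) (Sum.inr j))
    (B₁ C₁ : Matrix (Fin n₁) (Fin n₁) ℝ) (B₂ C₂ : Matrix (Fin n₁) (Fin n₂) ℝ)
    (B C : Matrix (Fin n₁ ⊕ Fin n₂) (Fin n₁ ⊕ Fin n₂) ℝ)
    (hB : B = Matrix.fromBlocks B₁ B₂ 0 0 * Q⁻¹)
    (hC : C = Matrix.fromBlocks C₁ C₂ 0 0 * Q⁻¹)
    (d₁ : Fin n₁ → ℝ) (d : (Fin n₁ ⊕ Fin n₂) → ℝ) (hd : d = Sum.elim d₁ 0)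
    (D : Matrix (Fin n₁) (Fin n₁) ℝ) (hD : D = B₁ + C₁ + C₁ * J * expInt J T)
    (hDinv : IsUnit D)
    (dt : Fin n₁ → ℝ)
    (hdt : dt = d₁ - C₁ *ᵥ (∫ s in (0:ℝ)..T, NormedSpace.exp ((T - s) • J) *ᵥ f₁ s)
        + B₂ *ᵥ ∑ i ∈ Finset.range ν, N ^ i *ᵥ iteratedDerivWithin i f₂ (Icc 0 T) 0
        + C₂ *ᵥ ∑ i ∈ Finset.range ν, N ^ i *ᵥ iteratedDerivWithin i f₂ (Icc 0 T) T)
    (μt : (Fin n₁ ⊕ Fin n₂) → ℝ)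
    (hμt : μt = Sum.elim (D⁻¹ *ᵥ dt)
        (-∑ i ∈ Finset.range ν, N ^ i *ᵥ iteratedDerivWithin i f₂ (Icc 0 T) 0))
    (ut : ℝ → (Fin n₁ ⊕ Fin n₂) → ℝ)
    (hut : ut = fun t => Sum.elim
        (expInt J t *ᵥ (J *ᵥ (D⁻¹ *ᵥ dt)) +
          ∫ s in (0:ℝ)..t, NormedSpace.exp ((t - s) • J) *ᵥ f₁ s)
        (-∑ i ∈ Finset.range ν, N ^ i *ᵥ (iteratedDerivWithin i f₂ (Icc 0 T) t
            - iteratedDerivWithin i f₂ (Icc 0 T) 0)))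
    (xsol : ℝ → (Fin n₁ ⊕ Fin n₂) → ℝ) (hxsol : xsol = fun t => Q *ᵥ (μt + ut t)) :
    -- xsol is a C¹ solution of the BVP
    ((∃ v : ℝ → (Fin n₁ ⊕ Fin n₂) → ℝ, ContinuousOn v (Icc 0 T) ∧
        (∀ t ∈ Icc 0 T, HasDerivWithinAt xsol (v t) (Icc 0 T) t) ∧
        (∀ t ∈ Ioo 0 T, E *ᵥ v t = A *ᵥ xsol t + f t)) ∧
      B *ᵥ xsol 0 + C *ᵥ xsol T = d) ∧
    -- and every C¹ solution of the BVP coincides with it on [0,T]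
    (∀ x x' : ℝ → (Fin n₁ ⊕ Fin n₂) → ℝ,
      (∀ t ∈ Icc 0 T, HasDerivWithinAt x (x' t) (Icc 0 T) t) →
      ContinuousOn x' (Icc 0 T) →
      (∀ t ∈ Ioo 0 T, E *ᵥ x' t = A *ᵥ x t + f t) →
      B *ᵥ x 0 + C *ᵥ x T = d →
      ∀ t ∈ Icc 0 T, x t = xsol t) := by
  obtain ⟨g, hg, hgf⟩ := (hf₁ ▸ (hf.mulVec_comp P Sum.inl).continuousOn :
    ContinuousOn f₁ (Icc 0 T)).exists_continuous_eqOn_Icc hT.le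
  have hf₂c : ContDiffOn ℝ ν f₂ (Icc 0 T) := hf₂ ▸ hf.mulVec_comp P Sum.inr
  have hPf : ∀ t ∈ Ioo 0 T, P *ᵥ f t = Sum.elim (g t) (f₂ t) := fun t ht => by
    rw [hgf (Ioo_subset_Icc_self ht), hf₁, hf₂]
    exact (Sum.elim_comp_inl_inr _).symm
  set X : (Fin n₁ → ℝ) → ℝ → Fin n₁ ⊕ Fin n₂ → ℝ := fun a t =>
    Q *ᵥ Sum.elim (duhamel J g a t) (nilpotentSol N ν f₂ (Icc 0 T) t)
  have hxsol' : EqOn xsol (X (D⁻¹ *ᵥ dt)) (Icc 0 T) := fun t ht => by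
    simp only [hxsol, X]
    rw [duhamel_eq_of_eqOn ht.1 (hgf.mono (Icc_subset_Icc_right ht.2)), duhamel_eq_add_expInt]
    simp only [hμt, hut, nilpotentSol, ← Sum.elim_add_add, mulVec_sub, Finset.sum_sub_distrib]
    exact congrArg _ (Sum.elim_eq_iff.2 ⟨by abel, by abel⟩)
  have hbc : ∀ a, B *ᵥ X a 0 + C *ᵥ X a T = d ↔ D *ᵥ a = dt := fun a => by
    simp only [X, duhamel_zero, duhamel_eq_of_eqOn hT.le hgf, nilpotentSol, hB, hC, hd, hD, hdt]
    exact boundary_eq_iff_of_weierstrass hQ B₁ C₁ J B₂ C₂ f₁ T a d₁ _ _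
  have hμ : D *ᵥ (D⁻¹ *ᵥ dt) = dt := by
    rw [mulVec_mulVec, mul_nonsing_inv _ ((isUnit_iff_isUnit_det D).1 hDinv), one_mulVec]
  refine ⟨⟨?_, ?_⟩, fun x x' hx _ hode hbcx t ht => ?_⟩
  · obtain ⟨v, hvc, hv, hvode⟩ :=
      exists_hasDerivWithinAt_of_weierstrass hP hE hA hT hN hg hf₂c hPf (D⁻¹ *ᵥ dt)
    refine ⟨v, hvc, fun t ht => (hv t ht).congr (fun _ hu => hxsol' hu) (hxsol' ht),
      fun t ht => ?_⟩
    rw [hxsol' (Ioo_subset_Icc_self ht)]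
    exact hvode t ht
  · rw [hxsol' (left_mem_Icc.2 hT.le), hxsol' (right_mem_Icc.2 hT.le)]
    exact (hbc _).2 hμ
  · have hx_eq : EqOn x (X ((Q⁻¹ *ᵥ x 0) ∘ Sum.inl)) (Icc 0 T) :=
      eqOn_of_weierstrass hP hQ hE hA hT hN hg hf₂c hPf hx hode
    have ha : (Q⁻¹ *ᵥ x 0) ∘ Sum.inl = D⁻¹ *ᵥ dt := mulVec_injective_iff_isUnit.2 hDinv <| by
      rw [hμ, ← hbc, ← hx_eq (left_mem_Icc.2 hT.le), ← hx_eq (right_mem_Icc.2 hT.le)]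
      exact hbcx
    rw [hx_eq ht, hxsol' ht, ha]

/-- unique solvability of the original BVP `Eẋ = Ax + f`,
`Bx(0)+Cx(T)=d`, with explicit solution `x(t) = Q(μ̃ + ũ(t))` obtained from
the Weierstrass canonical form, provided `D̃` is invertible. -/
theorem stmt_13 {n₁ n₂ : ℕ}
    (E A P Q : Matrix (Fin n₁ ⊕ Fin n₂) (Fin n₁ ⊕ Fin n₂) ℝ)
    (hreg : ∃ l : ℂ, (l • E.map Complex.ofReal - A.map Complex.ofReal).det ≠ 0)
    (hP : IsUnit P.det) (hQ : IsUnit Q.det)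
    (N : Matrix (Fin n₂) (Fin n₂) ℝ) (J : Matrix (Fin n₁) (Fin n₁) ℝ)
    (hE : P * E * Q = Matrix.fromBlocks 1 0 0 N)
    (hA : P * A * Q = Matrix.fromBlocks J 0 0 1)
    (ν : ℕ) (hν : ν ≠ 0) (hN : N ^ ν = 0) (hN' : N ^ (ν - 1) ≠ 0)
    (T : ℝ) (hT : 0 < T)
    (f : ℝ → (Fin n₁ ⊕ Fin n₂) → ℝ) (hf : ContDiffOn ℝ (ν : ℕ∞) f (Icc 0 T))
    (f₁ : ℝ → Fin n₁ → ℝ) (hf₁ : f₁ = fun t i => (P *ᵥ f t) (Sum.inl i))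
    (f₂ : ℝ → Fin n₂ → ℝ) (hf₂ : f₂ = fun t j => (P *ᵥ f t) (Sum.inr j))
    (B₁ C₁ : Matrix (Fin n₁) (Fin n₁) ℝ) (B₂ C₂ : Matrix (Fin n₁) (Fin n₂) ℝ)
    (B C : Matrix (Fin n₁ ⊕ Fin n₂) (Fin n₁ ⊕ Fin n₂) ℝ)
    (hB : B = Matrix.fromBlocks B₁ B₂ 0 0 * Q⁻¹)
    (hC : C = Matrix.fromBlocks C₁ C₂ 0 0 * Q⁻¹)
    (d₁ : Fin n₁ → ℝ) (d : (Fin n₁ ⊕ Fin n₂) → ℝ) (hd : d = Sum.elim d₁ 0)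
    (D : Matrix (Fin n₁) (Fin n₁) ℝ) (hD : D = B₁ + C₁ + C₁ * J * expInt J T)
    (hDinv : IsUnit D)
    (dt : Fin n₁ → ℝ)
    (hdt : dt = d₁ - C₁ *ᵥ (∫ s in (0:ℝ)..T, NormedSpace.exp ((T - s) • J) *ᵥ f₁ s)
        + B₂ *ᵥ ∑ i ∈ Finset.range ν, N ^ i *ᵥ iteratedDerivWithin i f₂ (Icc 0 T) 0
        + C₂ *ᵥ ∑ i ∈ Finset.range ν, N ^ i *ᵥ iteratedDerivWithin i f₂ (Icc 0 T) T)
    (μt : (Fin n₁ ⊕ Fin n₂) → ℝ)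
    (hμt : μt = Sum.elim (D⁻¹ *ᵥ dt)
        (-∑ i ∈ Finset.range ν, N ^ i *ᵥ iteratedDerivWithin i f₂ (Icc 0 T) 0))
    (ut : ℝ → (Fin n₁ ⊕ Fin n₂) → ℝ)
    (hut : ut = fun t => Sum.elim
        (expInt J t *ᵥ (J *ᵥ (D⁻¹ *ᵥ dt)) +
          ∫ s in (0:ℝ)..t, NormedSpace.exp ((t - s) • J) *ᵥ f₁ s)
        (-∑ i ∈ Finset.range ν, N ^ i *ᵥ (iteratedDerivWithin i f₂ (Icc 0 T) t
            - iteratedDerivWithin i f₂ (Icc 0 T) 0)))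
    (xsol : ℝ → (Fin n₁ ⊕ Fin n₂) → ℝ) (hxsol : xsol = fun t => Q *ᵥ (μt + ut t)) :
    -- xsol is a C¹ solution of the BVP
    ((∃ v : ℝ → (Fin n₁ ⊕ Fin n₂) → ℝ, ContinuousOn v (Icc 0 T) ∧
        (∀ t ∈ Icc 0 T, HasDerivWithinAt xsol (v t) (Icc 0 T) t) ∧
        (∀ t ∈ Ioo 0 T, E *ᵥ v t = A *ᵥ xsol t + f t)) ∧
      B *ᵥ xsol 0 + C *ᵥ xsol T = d) ∧
    -- and every C¹ solution of the BVP coincides with it on [0,T]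
    (∀ x x' : ℝ → (Fin n₁ ⊕ Fin n₂) → ℝ,
      (∀ t ∈ Icc 0 T, HasDerivWithinAt x (x' t) (Icc 0 T) t) →
      ContinuousOn x' (Icc 0 T) →
      (∀ t ∈ Ioo 0 T, E *ᵥ x' t = A *ᵥ x t + f t) →
      B *ᵥ x 0 + C *ᵥ x T = d →
      ∀ t ∈ Icc 0 T, x t = xsol t) :=
  stmt_13_general E A P Q hP hQ N J hE hA ν hN T hT f hf f₁ hf₁ f₂ hf₂ B₁ C₁ B₂ C₂ B C hB hC d₁ d hd
    D hD hDinv dt hdt μt hμt ut hut xsol hxsol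
end

section
/- Let (E, A) be a regular pair in Weierstrass form via P, Q with ν = ind(E, A), and f ∈ C^ν([0,T], ℝⁿ), Pf = (f̃₁, f̃₂)ᵀ, d = Q(d̃₁, d̃₂)ᵀ ∈ ℝⁿ. Then the initial value problem Eẋ = Ax + f, x(0) = d, has a (unique, C¹) solution if and only if d̃₂ = −Σ_{i=0}^{ν−1} Nⁱ f̃₂^{(i)}(0). -/
open Matrix Set

open Topology Filter

namespace Stmt14Aux

open NormedSpace

attribute [local instance] Matrix.linftyOpNormedRing Matrix.linftyOpNormedAlgebra

noncomputable def mvCLM {α β : Type*} [Fintype α] [Fintype β] (M : Matrix α β ℝ) :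
    (β → ℝ) →L[ℝ] (α → ℝ) :=
  LinearMap.toContinuousLinearMap M.mulVecLin

@[simp] lemma mvCLM_apply {α β : Type*} [Fintype α] [Fintype β] (M : Matrix α β ℝ) (v : β → ℝ) :
    mvCLM M v = M *ᵥ v := rfl

lemma hdw_mulVec {α β : Type*} [Fintype α] [Fintype β] (M : Matrix α β ℝ)
    {g : ℝ → β → ℝ} {g' : β → ℝ} {s : Set ℝ} {t : ℝ}
    (h : HasDerivWithinAt g g' s t) :
    HasDerivWithinAt (fun t => M *ᵥ g t) (M *ᵥ g') s t :=
  (mvCLM M).hasFDerivAt.comp_hasDerivWithinAt t h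

noncomputable def projCLM {α β γ : Type*} [Fintype α] [Fintype β] [Fintype γ]
    (M : Matrix β α ℝ) (e : γ → β) : (α → ℝ) →L[ℝ] (γ → ℝ) :=
  LinearMap.toContinuousLinearMap ((LinearMap.funLeft ℝ ℝ e).comp M.mulVecLin)

@[simp] lemma projCLM_apply {α β γ : Type*} [Fintype α] [Fintype β] [Fintype γ]
    (M : Matrix β α ℝ) (e : γ → β) (v : α → ℝ) :
    projCLM M e v = (M *ᵥ v) ∘ e := rfl

noncomputable def mvBil {γ : Type*} [Fintype γ] [DecidableEq γ] :
    Matrix γ γ ℝ →L[ℝ] (γ → ℝ) →L[ℝ] (γ → ℝ) :=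
  LinearMap.toContinuousLinearMap
    { toFun := fun M => mvCLM M
      map_add' := fun M M' => by
        apply ContinuousLinearMap.ext; intro v
        simp [Matrix.add_mulVec]
      map_smul' := fun a M => by
        apply ContinuousLinearMap.ext; intro v
        simp [Matrix.smul_mulVec] }

@[simp] lemma mvBil_apply {γ : Type*} [Fintype γ] [DecidableEq γ] (M : Matrix γ γ ℝ) (v : γ → ℝ) :
    mvBil M v = M *ᵥ v := rfl

/-- limit helper: a continuous-on-Icc function vanishing on the open interval vanishes on Icc -/
lemma eq_zero_of_eqOn_Ioo {k : Type*} [Fintype k] {z : ℝ → k → ℝ} {T t : ℝ} (hT : 0 < T)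
    (hc : ContinuousWithinAt z (Icc 0 T) t) (ht : t ∈ Icc 0 T)
    (h0 : ∀ s ∈ Ioo 0 T, z s = 0) : z t = 0 := by
  have hne : (𝓝[Ioo (0:ℝ) T] t).NeBot := by
    rw [← mem_closure_iff_nhdsWithin_neBot, closure_Ioo hT.ne]
    exact ht
  have h1 : Filter.Tendsto z (𝓝[Ioo (0:ℝ) T] t) (𝓝 (z t)) :=
    hc.mono Ioo_subset_Icc_self
  have h2 : Filter.Tendsto z (𝓝[Ioo (0:ℝ) T] t) (𝓝 0) := by
    refine Filter.Tendsto.congr' ?_ tendsto_const_nhds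
    filter_upwards [self_mem_nhdsWithin] with s hs using (h0 s hs).symm
  exact tendsto_nhds_unique h1 h2

/-- Key nilpotent lemma: `N z' = z` on the open interval with `N` nilpotent forces `z = 0`. -/
lemma nilpotent_zero {k : Type*} [Fintype k] [DecidableEq k]
    {N : Matrix k k ℝ} {ν : ℕ} (hN : N ^ ν = 0)
    {T : ℝ} (hT : 0 < T) {z : ℝ → k → ℝ} {z' : ℝ → k → ℝ}
    (hz : ∀ t ∈ Icc 0 T, HasDerivWithinAt z (z' t) (Icc 0 T) t)
    (heq : ∀ t ∈ Ioo 0 T, N *ᵥ z' t = z t) :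
    ∀ t ∈ Icc 0 T, z t = 0 := by
  have key : ∀ m : ℕ, ∀ t ∈ Ioo (0:ℝ) T, N ^ (ν - m) *ᵥ z t = 0 := by
    intro m
    induction m with
    | zero =>
      intro t _
      simp [hN, Matrix.zero_mulVec]
    | succ m ih =>
      intro t ht
      by_cases hm : ν ≤ m
      · have h' : ν - (m + 1) = ν - m := by omega
        rw [h']; exact ih t ht
      · have hsub : ν - m = (ν - (m + 1)) + 1 := by omega
        have htIcc : t ∈ Icc (0:ℝ) T := Ioo_subset_Icc_self ht
        have hderiv : HasDerivWithinAt (fun s => N ^ (ν - m) *ᵥ z s)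
            (N ^ (ν - m) *ᵥ z' t) (Ioo 0 T) t :=
          (hdw_mulVec _ (hz t htIcc)).mono Ioo_subset_Icc_self
        have hzero : HasDerivWithinAt (fun s => N ^ (ν - m) *ᵥ z s) 0 (Ioo 0 T) t :=
          (hasDerivWithinAt_const t _ (0 : k → ℝ)).congr (fun s hs => ih s hs) (ih t ht)
        have hud : UniqueDiffWithinAt ℝ (Ioo (0:ℝ) T) t := isOpen_Ioo.uniqueDiffWithinAt ht
        have huniq : N ^ (ν - m) *ᵥ z' t = 0 :=
          (hderiv.derivWithin hud).symm.trans (hzero.derivWithin hud)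
        calc N ^ (ν - (m+1)) *ᵥ z t
            = N ^ (ν - (m+1)) *ᵥ (N *ᵥ z' t) := by rw [heq t ht]
          _ = (N ^ (ν - (m+1)) * N) *ᵥ z' t := Matrix.mulVec_mulVec _ _ _
          _ = N ^ (ν - m) *ᵥ z' t := by rw [← pow_succ, ← hsub]
          _ = 0 := huniq
  have hIoo : ∀ t ∈ Ioo (0:ℝ) T, z t = 0 := by
    intro t ht
    have := key ν t ht
    simpa [Matrix.one_mulVec] using this
  intro t ht
  exact eq_zero_of_eqOn_Ioo hT ((hz t ht).continuousWithinAt) ht hIoo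


section Exp

variable {m : Type*} [Fintype m] [DecidableEq m]

lemma exp_mul_exp_neg (J : Matrix m m ℝ) (t : ℝ) :
    exp (t • J) * exp ((-t) • J) = 1 := by
  have hc : Commute (t • J) ((-t) • J) := ((Commute.refl J).smul_right (-t)).smul_left t
  rw [← Matrix.exp_add_of_commute _ _ hc]
  have : t • J + (-t) • J = 0 := by
    rw [← add_smul]; simp
  rw [this, exp_zero]

lemma commute_exp (J : Matrix m m ℝ) (t : ℝ) :
    J * exp (t • J) = exp (t • J) * J :=
  ((Commute.refl J).smul_right t).exp_right

lemma hasDerivAt_expc (J : Matrix m m ℝ) (t : ℝ) :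
    HasDerivAt (fun s : ℝ => mvBil (exp (s • J))) (mvBil (exp (t • J) * J)) t := by
  have h := (mvBil.hasFDerivAt).comp_hasDerivAt t (hasDerivAt_exp_smul_const J t)
  exact h

lemma continuous_expc (J : Matrix m m ℝ) :
    Continuous (fun s : ℝ => mvBil (exp ((-s) • J))) := by
  exact mvBil.continuous.comp (exp_continuous.comp ((continuous_neg).smul continuous_const))

/-- Existence of a global solution to the linear ODE `y' = J y + g` on `[0, T]`. -/
lemma exists_linear_ode (J : Matrix m m ℝ) {T : ℝ} (hT : 0 < T)
    (g : ℝ → m → ℝ) (hg : ContinuousOn g (Icc 0 T)) (v0 : m → ℝ) :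
    ∃ y : ℝ → m → ℝ,
      (∀ t ∈ Icc 0 T, HasDerivWithinAt y (J *ᵥ y t + g t) (Icc 0 T) t) ∧
      y 0 = v0 ∧ ContinuousOn y (Icc 0 T) := by
  classical
  set G : ℝ → m → ℝ := fun s => exp ((-s) • J) *ᵥ g s with hG
  have hGc : ContinuousOn G (Icc 0 T) := by
    have : ContinuousOn (fun s => (mvBil (exp ((-s) • J))) (g s)) (Icc 0 T) :=
      ContinuousOn.clm_apply ((continuous_expc J).continuousOn) hg
    simpa [hG] using this
  set u : ℝ → m → ℝ := fun t => v0 + ∫ s in (0:ℝ)..t, G s with hu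
  have hud : ∀ t ∈ Icc (0:ℝ) T, HasDerivWithinAt u (G t) (Icc 0 T) t := by
    intro t ht
    haveI : Fact (t ∈ Icc (0:ℝ) T) := ⟨ht⟩
    have hsub : uIcc (0:ℝ) t ⊆ Icc 0 T := by
      rw [uIcc_of_le ht.1]; exact Icc_subset_Icc le_rfl ht.2
    have hint : IntervalIntegrable G MeasureTheory.volume 0 t :=
      (hGc.mono hsub).intervalIntegrable
    have hftc : HasDerivWithinAt (fun r => ∫ s in (0:ℝ)..r, G s) (G t) (Icc 0 T) t :=
      intervalIntegral.integral_hasDerivWithinAt_right hint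
        (hGc.stronglyMeasurableAtFilter_nhdsWithin measurableSet_Icc t)
        (hGc t ht)
    simpa [hu] using hftc.const_add v0
  have hyd : ∀ t ∈ Icc (0:ℝ) T, HasDerivWithinAt (fun s => exp (s • J) *ᵥ u s)
      (J *ᵥ (exp (t • J) *ᵥ u t) + g t) (Icc 0 T) t := by
    intro t ht
    have hc : HasDerivWithinAt (fun s : ℝ => mvBil (exp (s • J)))
        (mvBil (exp (t • J) * J)) (Icc 0 T) t := (hasDerivAt_expc J t).hasDerivWithinAt
    have hy : HasDerivWithinAt (fun s => (mvBil (exp (s • J))) (u s))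
        ((mvBil (exp (t • J) * J)) (u t) + (mvBil (exp (t • J))) (G t)) (Icc 0 T) t :=
      hc.clm_apply (hud t ht)
    have he1 : (mvBil (exp (t • J) * J)) (u t) = J *ᵥ (exp (t • J) *ᵥ u t) := by
      rw [mvBil_apply, ← commute_exp, ← Matrix.mulVec_mulVec]
    have he2 : (mvBil (exp (t • J))) (G t) = g t := by
      rw [mvBil_apply, hG, Matrix.mulVec_mulVec, exp_mul_exp_neg, Matrix.one_mulVec]
    rw [he1, he2] at hy
    exact hy
  refine ⟨fun t => exp (t • J) *ᵥ u t, hyd, ?_, fun t ht => (hyd t ht).continuousWithinAt⟩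
  simp [hu, intervalIntegral.integral_same]

/-- Uniqueness: solutions of `w' = J w` on `(0,T)` with `w 0 = 0` vanish on `[0,T]`. -/
lemma linear_ode_zero (J : Matrix m m ℝ) {T : ℝ} (hT : 0 < T)
    {w w' : ℝ → m → ℝ}
    (hw : ∀ t ∈ Icc 0 T, HasDerivWithinAt w (w' t) (Icc 0 T) t)
    (heq : ∀ t ∈ Ioo 0 T, w' t = J *ᵥ w t) (h0 : w 0 = 0) :
    ∀ t ∈ Icc 0 T, w t = 0 := by
  set u : ℝ → m → ℝ := fun t => exp ((-t) • J) *ᵥ w t with hu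
  have hcu : ContinuousOn u (Icc 0 T) :=
    ContinuousOn.clm_apply ((continuous_expc J).continuousOn)
      (fun t ht => (hw t ht).continuousWithinAt)
  have hder : ∀ t ∈ Ioo (0:ℝ) T, HasDerivAt u 0 t := by
    intro t ht
    have htIcc : t ∈ Icc (0:ℝ) T := Ioo_subset_Icc_self ht
    have hcexp : HasDerivAt (fun s : ℝ => mvBil (exp ((-s) • J)))
        (-(mvBil (exp ((-t) • J) * J))) t := by
      have h1 : HasDerivAt (fun s : ℝ => exp (s • J)) (exp ((-t) • J) * J) (-t) :=
        hasDerivAt_exp_smul_const J (-t)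
      have h2 : HasDerivAt (fun s : ℝ => -s) (-1 : ℝ) t := (hasDerivAt_neg t)
      have h3 : HasDerivAt (fun s : ℝ => exp ((-s) • J))
          ((-1 : ℝ) • (exp ((-t) • J) * J)) t := h1.scomp t h2
      have h4 := (mvBil.hasFDerivAt).comp_hasDerivAt t h3
      exact h4.congr_deriv (by rw [neg_one_smul]; exact map_neg mvBil _)
    have hwd : HasDerivWithinAt w (w' t) (Icc 0 T) t := hw t htIcc
    have hIccNhds : Icc (0:ℝ) T ∈ 𝓝 t := Icc_mem_nhds ht.1 ht.2
    have hwt : HasDerivAt w (w' t) t := hwd.hasDerivAt hIccNhds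
    have := (hcexp.clm_apply hwt :
      HasDerivAt (fun s => (mvBil (exp ((-s) • J))) (w s))
        ((-(mvBil (exp ((-t) • J) * J))) (w t) + (mvBil (exp ((-t) • J))) (w' t)) t)
    have hval : (-(mvBil (exp ((-t) • J) * J))) (w t)
        + (mvBil (exp ((-t) • J))) (w' t) = 0 := by
      rw [heq t ht]
      simp only [ContinuousLinearMap.neg_apply, mvBil_apply]
      rw [Matrix.mulVec_mulVec]
      abel
    rw [hval] at this
    exact this
  -- u is constant on [a, T] for every a in (0, T)
  have hconst : ∀ a ∈ Ioo (0:ℝ) T, ∀ t ∈ Icc a T, u t = u a := by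
    intro a ha t ht
    refine constant_of_has_deriv_right_zero
      (hcu.mono (Icc_subset_Icc ha.1.le le_rfl)) (fun s hs => ?_) t ht
    have hsIoo : s ∈ Ioo (0:ℝ) T := ⟨lt_of_lt_of_le ha.1 hs.1, hs.2⟩
    exact (hder s hsIoo).hasDerivWithinAt
  -- conclude u t = u 0 on all of Icc
  have huz : ∀ t ∈ Icc (0:ℝ) T, u t = u 0 := by
    intro t ht
    rcases eq_or_lt_of_le ht.1 with h | h
    · rw [← h]
    · have hne : (𝓝[Ioo (0:ℝ) t] (0:ℝ)).NeBot := by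
        rw [← mem_closure_iff_nhdsWithin_neBot, closure_Ioo h.ne]
        exact ⟨le_rfl, h.le⟩
      have hsub : Ioo (0:ℝ) t ⊆ Icc 0 T := fun s hs =>
        ⟨hs.1.le, hs.2.le.trans ht.2⟩
      have h1 : Filter.Tendsto u (𝓝[Ioo (0:ℝ) t] 0) (𝓝 (u 0)) :=
        (hcu 0 (left_mem_Icc.mpr hT.le)).mono hsub
      have h2 : Filter.Tendsto u (𝓝[Ioo (0:ℝ) t] 0) (𝓝 (u t)) := by
        refine Filter.Tendsto.congr' ?_ tendsto_const_nhds
        filter_upwards [self_mem_nhdsWithin] with s hs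
        have hsIoo : s ∈ Ioo (0:ℝ) T := ⟨hs.1, lt_of_lt_of_le hs.2 ht.2⟩
        exact hconst s hsIoo t ⟨hs.2.le, ht.2⟩
      exact tendsto_nhds_unique h2 h1
  intro t ht
  have hu0 : u 0 = 0 := by simp [hu, h0, Matrix.mulVec_zero]
  have hut : u t = 0 := (huz t ht).trans hu0
  have : exp (t • J) *ᵥ u t = w t := by
    rw [hu, Matrix.mulVec_mulVec, exp_mul_exp_neg, Matrix.one_mulVec]
  rw [← this, hut, Matrix.mulVec_zero]

end Exp


lemma hdw_proj {α β γ : Type*} [Fintype α] [Fintype β] [Fintype γ]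
    (M : Matrix β α ℝ) (e : γ → β) {x : ℝ → α → ℝ} {x' : α → ℝ} {s : Set ℝ} {t : ℝ}
    (h : HasDerivWithinAt x x' s t) :
    HasDerivWithinAt (fun u => (M *ᵥ x u) ∘ e) ((M *ᵥ x') ∘ e) s t := by
  have := (projCLM M e).hasFDerivAt.comp_hasDerivWithinAt t h
  simpa [Function.comp_def] using this

noncomputable def elimCLM {α β : Type*} [Fintype α] [Fintype β] :
    ((α → ℝ) × (β → ℝ)) →L[ℝ] (α ⊕ β → ℝ) :=
  LinearMap.toContinuousLinearMap
    ((LinearEquiv.sumArrowLequivProdArrow α β ℝ ℝ).symm.toLinearMap)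

@[simp] lemma elimCLM_apply {α β : Type*} [Fintype α] [Fintype β] (p : (α → ℝ) × (β → ℝ)) :
    elimCLM p = Sum.elim p.1 p.2 := rfl

section Blocks

variable {n₁ n₂ : ℕ} {E A P Q : Matrix (Fin n₁ ⊕ Fin n₂) (Fin n₁ ⊕ Fin n₂) ℝ}
  {N : Matrix (Fin n₂) (Fin n₂) ℝ} {J : Matrix (Fin n₁) (Fin n₁) ℝ}

lemma decouple (hQ : IsUnit Q.det)
    (hE : P * E * Q = Matrix.fromBlocks 1 0 0 N)
    (hA : P * A * Q = Matrix.fromBlocks J 0 0 1)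
    (v w r : (Fin n₁ ⊕ Fin n₂) → ℝ) (h : E *ᵥ w = A *ᵥ v + r) :
    (Q⁻¹ *ᵥ w) ∘ Sum.inl = J *ᵥ ((Q⁻¹ *ᵥ v) ∘ Sum.inl) + (P *ᵥ r) ∘ Sum.inl ∧
    N *ᵥ ((Q⁻¹ *ᵥ w) ∘ Sum.inr) = (Q⁻¹ *ᵥ v) ∘ Sum.inr + (P *ᵥ r) ∘ Sum.inr := by
  have hQQ : Q * Q⁻¹ = 1 := Matrix.mul_nonsing_inv Q hQ
  have hPE : P * E = Matrix.fromBlocks 1 0 0 N * Q⁻¹ := by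
    calc P * E = P * E * (Q * Q⁻¹) := by rw [hQQ, mul_one]
    _ = (P * E * Q) * Q⁻¹ := by rw [Matrix.mul_assoc (P * E)]
    _ = Matrix.fromBlocks 1 0 0 N * Q⁻¹ := by rw [hE]
  have hPA : P * A = Matrix.fromBlocks J 0 0 1 * Q⁻¹ := by
    calc P * A = P * A * (Q * Q⁻¹) := by rw [hQQ, mul_one]
    _ = (P * A * Q) * Q⁻¹ := by rw [Matrix.mul_assoc (P * A)]
    _ = Matrix.fromBlocks J 0 0 1 * Q⁻¹ := by rw [hA]
  have hL : P *ᵥ (E *ᵥ w)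
      = Sum.elim ((Q⁻¹ *ᵥ w) ∘ Sum.inl) (N *ᵥ ((Q⁻¹ *ᵥ w) ∘ Sum.inr)) := by
    rw [Matrix.mulVec_mulVec, hPE, ← Matrix.mulVec_mulVec, Matrix.fromBlocks_mulVec]
    simp [Matrix.one_mulVec, Matrix.zero_mulVec]
  have hR : P *ᵥ (A *ᵥ v)
      = Sum.elim (J *ᵥ ((Q⁻¹ *ᵥ v) ∘ Sum.inl)) ((Q⁻¹ *ᵥ v) ∘ Sum.inr) := by
    rw [Matrix.mulVec_mulVec, hPA, ← Matrix.mulVec_mulVec, Matrix.fromBlocks_mulVec]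
    simp [Matrix.one_mulVec, Matrix.zero_mulVec]
  have h2 : P *ᵥ (E *ᵥ w) = P *ᵥ (A *ᵥ v) + P *ᵥ r := by rw [h, Matrix.mulVec_add]
  rw [hL, hR] at h2
  constructor
  · funext i
    have := congrFun h2 (Sum.inl i)
    simpa using this
  · funext i
    have := congrFun h2 (Sum.inr i)
    simpa using this

lemma assemble (hP : IsUnit P.det)
    (hE : P * E * Q = Matrix.fromBlocks 1 0 0 N)
    (hA : P * A * Q = Matrix.fromBlocks J 0 0 1)
    (a₁ b₁ : Fin n₁ → ℝ) (a₂ b₂ : Fin n₂ → ℝ) (r : (Fin n₁ ⊕ Fin n₂) → ℝ)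
    (h1 : b₁ = J *ᵥ a₁ + (P *ᵥ r) ∘ Sum.inl)
    (h2 : N *ᵥ b₂ = a₂ + (P *ᵥ r) ∘ Sum.inr) :
    E *ᵥ (Q *ᵥ Sum.elim b₁ b₂) = A *ᵥ (Q *ᵥ Sum.elim a₁ a₂) + r := by
  have hP1 : P⁻¹ * P = 1 := Matrix.nonsing_inv_mul P hP
  have hinj : ∀ a b : (Fin n₁ ⊕ Fin n₂) → ℝ, P *ᵥ a = P *ᵥ b → a = b := by
    intro a b hab
    have := congrArg (fun z => P⁻¹ *ᵥ z) hab
    simpa [Matrix.mulVec_mulVec, hP1, Matrix.one_mulVec] using this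
  refine hinj _ _ ?_
  have hLb : P *ᵥ (E *ᵥ (Q *ᵥ Sum.elim b₁ b₂)) = Sum.elim b₁ (N *ᵥ b₂) := by
    rw [Matrix.mulVec_mulVec, Matrix.mulVec_mulVec, hE, Matrix.fromBlocks_mulVec]
    simp [Matrix.one_mulVec, Matrix.zero_mulVec]
  have hRa : P *ᵥ (A *ᵥ (Q *ᵥ Sum.elim a₁ a₂)) = Sum.elim (J *ᵥ a₁) a₂ := by
    rw [Matrix.mulVec_mulVec, Matrix.mulVec_mulVec, hA, Matrix.fromBlocks_mulVec]
    simp [Matrix.one_mulVec, Matrix.zero_mulVec]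
  rw [Matrix.mulVec_add, hLb, hRa]
  funext i
  cases i with
  | inl i =>
    simpa using congrFun h1 i
  | inr i =>
    simpa using congrFun h2 i

end Blocks

end Stmt14Aux

open Stmt14Aux

/-- solvability criterion for the initial value problem
`Eẋ = Ax + f`, `x(0) = d` with `d = Q(d̃₁, d̃₂)ᵀ`: a (unique, C¹) solution
exists iff `d̃₂ = −Σ_{i<ν} Nⁱ f̃₂^{(i)}(0)`. -/
theorem stmt_14 {n₁ n₂ : ℕ}
    (E A P Q : Matrix (Fin n₁ ⊕ Fin n₂) (Fin n₁ ⊕ Fin n₂) ℝ)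
    (hreg : ∃ l : ℂ, (l • E.map Complex.ofReal - A.map Complex.ofReal).det ≠ 0)
    (hP : IsUnit P.det) (hQ : IsUnit Q.det)
    (N : Matrix (Fin n₂) (Fin n₂) ℝ) (J : Matrix (Fin n₁) (Fin n₁) ℝ)
    (hE : P * E * Q = Matrix.fromBlocks 1 0 0 N)
    (hA : P * A * Q = Matrix.fromBlocks J 0 0 1)
    (ν : ℕ) (hν : ν ≠ 0) (hN : N ^ ν = 0) (hN' : N ^ (ν - 1) ≠ 0)
    (T : ℝ) (hT : 0 < T)
    (f : ℝ → (Fin n₁ ⊕ Fin n₂) → ℝ) (hf : ContDiffOn ℝ (ν : ℕ∞) f (Icc 0 T))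
    (f₂ : ℝ → Fin n₂ → ℝ) (hf₂ : f₂ = fun t j => (P *ᵥ f t) (Sum.inr j))
    (dt₁ : Fin n₁ → ℝ) (dt₂ : Fin n₂ → ℝ)
    (d : (Fin n₁ ⊕ Fin n₂) → ℝ) (hd : d = Q *ᵥ Sum.elim dt₁ dt₂) :
    -- existence iff the consistency condition holds
    ((∃ x x' : ℝ → (Fin n₁ ⊕ Fin n₂) → ℝ,
        (∀ t ∈ Icc 0 T, HasDerivWithinAt x (x' t) (Icc 0 T) t) ∧
        ContinuousOn x' (Icc 0 T) ∧
        (∀ t ∈ Ioo 0 T, E *ᵥ x' t = A *ᵥ x t + f t) ∧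
        x 0 = d) ↔
      dt₂ = -∑ i ∈ Finset.range ν, N ^ i *ᵥ iteratedDerivWithin i f₂ (Icc 0 T) 0) ∧
    -- and the solution is unique
    (∀ x x' y y' : ℝ → (Fin n₁ ⊕ Fin n₂) → ℝ,
      (∀ t ∈ Icc 0 T, HasDerivWithinAt x (x' t) (Icc 0 T) t) →
      ContinuousOn x' (Icc 0 T) →
      (∀ t ∈ Ioo 0 T, E *ᵥ x' t = A *ᵥ x t + f t) → x 0 = d →
      (∀ t ∈ Icc 0 T, HasDerivWithinAt y (y' t) (Icc 0 T) t) →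
      ContinuousOn y' (Icc 0 T) →
      (∀ t ∈ Ioo 0 T, E *ᵥ y' t = A *ᵥ y t + f t) → y 0 = d →
      ∀ t ∈ Icc 0 T, x t = y t) := by
  classical
  have hQ1 : Q⁻¹ * Q = 1 := Matrix.nonsing_inv_mul Q hQ
  have hQ1' : Q * Q⁻¹ = 1 := Matrix.mul_nonsing_inv Q hQ
  have hUD : UniqueDiffOn ℝ (Icc (0:ℝ) T) := uniqueDiffOn_Icc hT
  -- smoothness of f₂
  have hf₂' : ContDiffOn ℝ (ν : ℕ∞) f₂ (Icc 0 T) := by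
    have hrw : f₂ = fun t => (projCLM P Sum.inr) (f t) := by
      funext t j; rw [hf₂]; rfl
    rw [hrw]
    exact (projCLM P Sum.inr).contDiff.comp_contDiffOn hf
  have hg_cont : ∀ i : ℕ, i ≤ ν → ContinuousOn (iteratedDerivWithin i f₂ (Icc 0 T)) (Icc 0 T) :=
    fun i hi => hf₂'.continuousOn_iteratedDerivWithin (by exact_mod_cast hi) hUD
  have hg_deriv : ∀ i : ℕ, i < ν → ∀ t ∈ Icc (0:ℝ) T,
      HasDerivWithinAt (iteratedDerivWithin i f₂ (Icc 0 T))
        (iteratedDerivWithin (i+1) f₂ (Icc 0 T) t) (Icc 0 T) t := by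
    intro i hi t ht
    have hdiff : DifferentiableWithinAt ℝ (iteratedDerivWithin i f₂ (Icc 0 T)) (Icc 0 T) t :=
      (hf₂'.differentiableOn_iteratedDerivWithin (by exact_mod_cast hi) hUD) t ht
    have h := hdiff.hasDerivWithinAt
    rwa [← iteratedDerivWithin_succ] at h
  -- the shift identity
  have hshift : ∀ t : ℝ,
      N *ᵥ (∑ i ∈ Finset.range ν, N ^ i *ᵥ iteratedDerivWithin (i+1) f₂ (Icc 0 T) t)
      = (∑ i ∈ Finset.range ν, N ^ i *ᵥ iteratedDerivWithin i f₂ (Icc 0 T) t) - f₂ t := by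
    intro t
    have h1 : N *ᵥ (∑ i ∈ Finset.range ν, N ^ i *ᵥ iteratedDerivWithin (i+1) f₂ (Icc 0 T) t)
        = ∑ i ∈ Finset.range ν, N ^ (i+1) *ᵥ iteratedDerivWithin (i+1) f₂ (Icc 0 T) t := by
      have hmsum : N *ᵥ (∑ i ∈ Finset.range ν, N ^ i *ᵥ iteratedDerivWithin (i+1) f₂ (Icc 0 T) t)
          = ∑ i ∈ Finset.range ν, N *ᵥ (N ^ i *ᵥ iteratedDerivWithin (i+1) f₂ (Icc 0 T) t) := by
        simp only [← Matrix.mulVecLin_apply]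
        exact map_sum N.mulVecLin _ _
      rw [hmsum]
      refine Finset.sum_congr rfl fun i _ => ?_
      rw [Matrix.mulVec_mulVec, ← pow_succ']
    rw [h1, eq_sub_iff_add_eq]
    have hF0 : N ^ 0 *ᵥ iteratedDerivWithin 0 f₂ (Icc 0 T) t = f₂ t := by
      simp [iteratedDerivWithin_zero]
    rw [← hF0]
    rw [← Finset.sum_range_succ' (fun j => N ^ j *ᵥ iteratedDerivWithin j f₂ (Icc 0 T) t) ν]
    rw [Finset.sum_range_succ, hN, Matrix.zero_mulVec, add_zero]
  have hfinr : ∀ t : ℝ, (P *ᵥ f t) ∘ Sum.inr = f₂ t := by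
    intro t; funext j; rw [hf₂]; rfl
  constructor
  · constructor
    · -- solution implies consistency
      rintro ⟨x, x', hxd, hx'c, hxe, hx0⟩
      have hdec := fun t (ht : t ∈ Ioo (0:ℝ) T) =>
        decouple hQ hE hA (x t) (x' t) (f t) (hxe t ht)
      have hzd : ∀ t ∈ Icc (0:ℝ) T, HasDerivWithinAt
          (fun s => (Q⁻¹ *ᵥ x s) ∘ Sum.inr
            + ∑ i ∈ Finset.range ν, N ^ i *ᵥ iteratedDerivWithin i f₂ (Icc 0 T) s)
          ((Q⁻¹ *ᵥ x' t) ∘ Sum.inr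
            + ∑ i ∈ Finset.range ν, N ^ i *ᵥ iteratedDerivWithin (i+1) f₂ (Icc 0 T) t)
          (Icc 0 T) t := by
        intro t ht
        refine (hdw_proj Q⁻¹ Sum.inr (hxd t ht)).add (HasDerivWithinAt.fun_sum fun i hi => ?_)
        exact hdw_mulVec _ (hg_deriv i (Finset.mem_range.mp hi) t ht)
      have hzeq : ∀ t ∈ Ioo (0:ℝ) T,
          N *ᵥ ((Q⁻¹ *ᵥ x' t) ∘ Sum.inr
            + ∑ i ∈ Finset.range ν, N ^ i *ᵥ iteratedDerivWithin (i+1) f₂ (Icc 0 T) t)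
          = (Q⁻¹ *ᵥ x t) ∘ Sum.inr
            + ∑ i ∈ Finset.range ν, N ^ i *ᵥ iteratedDerivWithin i f₂ (Icc 0 T) t := by
        intro t ht
        rw [Matrix.mulVec_add, (hdec t ht).2, hshift t, hfinr t]
        abel
      have hz0 := nilpotent_zero hN hT hzd hzeq 0 (left_mem_Icc.mpr hT.le)
      have hQd : Q⁻¹ *ᵥ d = Sum.elim dt₁ dt₂ := by
        rw [hd, Matrix.mulVec_mulVec, hQ1, Matrix.one_mulVec]
      rw [hx0, hQd] at hz0
      have hsum : dt₂ + ∑ i ∈ Finset.range ν, N ^ i *ᵥ iteratedDerivWithin i f₂ (Icc 0 T) 0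
          = 0 := by
        have : (Sum.elim dt₁ dt₂) ∘ Sum.inr = dt₂ := by funext j; rfl
        rwa [this] at hz0
      exact eq_neg_of_add_eq_zero_left hsum
    · -- consistency implies existence
      intro hcons
      have hfc : ContinuousOn f (Icc 0 T) := hf.continuousOn
      have hf1c : ContinuousOn (fun t => (P *ᵥ f t) ∘ Sum.inl) (Icc 0 T) := by
        have := (projCLM P Sum.inl).continuous.comp_continuousOn hfc
        simpa [Function.comp_def] using this
      obtain ⟨y, hyd, hy0, hyc⟩ := exists_linear_ode J hT _ hf1c dt₁
      -- second block explicit solution and its derivative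
      have hw2d : ∀ t ∈ Icc (0:ℝ) T, HasDerivWithinAt
          (fun s => -∑ i ∈ Finset.range ν, N ^ i *ᵥ iteratedDerivWithin i f₂ (Icc 0 T) s)
          (-∑ i ∈ Finset.range ν, N ^ i *ᵥ iteratedDerivWithin (i+1) f₂ (Icc 0 T) t)
          (Icc 0 T) t := by
        intro t ht
        exact (HasDerivWithinAt.fun_sum fun i hi =>
          hdw_mulVec _ (hg_deriv i (Finset.mem_range.mp hi) t ht)).neg
      refine ⟨fun t => Q *ᵥ Sum.elim (y t)
          (-∑ i ∈ Finset.range ν, N ^ i *ᵥ iteratedDerivWithin i f₂ (Icc 0 T) t),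
        fun t => Q *ᵥ Sum.elim (J *ᵥ y t + (P *ᵥ f t) ∘ Sum.inl)
          (-∑ i ∈ Finset.range ν, N ^ i *ᵥ iteratedDerivWithin (i+1) f₂ (Icc 0 T) t),
        ?_, ?_, ?_, ?_⟩
      · intro t ht
        have hpair : HasDerivWithinAt
            (fun s => (y s, -∑ i ∈ Finset.range ν,
              N ^ i *ᵥ iteratedDerivWithin i f₂ (Icc 0 T) s))
            (J *ᵥ y t + (P *ᵥ f t) ∘ Sum.inl,
              -∑ i ∈ Finset.range ν, N ^ i *ᵥ iteratedDerivWithin (i+1) f₂ (Icc 0 T) t)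
            (Icc 0 T) t := (hyd t ht).prodMk (hw2d t ht)
        have h := ((mvCLM Q).comp elimCLM).hasFDerivAt.comp_hasDerivWithinAt t hpair
        simpa [Function.comp_def] using h
      · -- continuity of x'
        have hc2 : ContinuousOn
            (fun t => -∑ i ∈ Finset.range ν,
              N ^ i *ᵥ iteratedDerivWithin (i+1) f₂ (Icc 0 T) t) (Icc 0 T) := by
          refine (continuousOn_finset_sum _ fun i hi => ?_).neg
          exact (mvCLM (N ^ i)).continuous.comp_continuousOn
            (hg_cont (i+1) (Nat.succ_le_of_lt (Finset.mem_range.mp hi)))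
        have hc1 : ContinuousOn (fun t => J *ᵥ y t + (P *ᵥ f t) ∘ Sum.inl) (Icc 0 T) :=
          ((mvCLM J).continuous.comp_continuousOn hyc).add hf1c
        have := ((mvCLM Q).comp elimCLM).continuous.comp_continuousOn (hc1.prodMk hc2)
        simpa [Function.comp_def] using this
      · -- the equation
        intro t ht
        refine assemble hP hE hA (y t) _ _ _ (f t) rfl ?_
        rw [Matrix.mulVec_neg, hshift t, hfinr t]
        abel
      · -- initial value
        have hw20 : -∑ i ∈ Finset.range ν, N ^ i *ᵥ iteratedDerivWithin i f₂ (Icc 0 T) 0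
            = dt₂ := hcons.symm
        show Q *ᵥ Sum.elim (y 0)
          (-∑ i ∈ Finset.range ν, N ^ i *ᵥ iteratedDerivWithin i f₂ (Icc 0 T) 0) = d
        rw [hy0, hw20]
        exact hd.symm
  · -- uniqueness
    intro x x' y y' hxd hx'c hxe hx0 hyd hy'c hye hy0
    have hwd : ∀ t ∈ Icc (0:ℝ) T,
        HasDerivWithinAt (fun s => x s - y s) (x' t - y' t) (Icc 0 T) t :=
      fun t ht => (hxd t ht).sub (hyd t ht)
    have hweq : ∀ t ∈ Ioo (0:ℝ) T, E *ᵥ (x' t - y' t) = A *ᵥ (x t - y t) + 0 := by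
      intro t ht
      rw [Matrix.mulVec_sub, hxe t ht, hye t ht, Matrix.mulVec_sub, add_zero]
      abel
    have hdec := fun t (ht : t ∈ Ioo (0:ℝ) T) =>
      decouple hQ hE hA (x t - y t) (x' t - y' t) 0 (hweq t ht)
    have hw0 : x 0 - y 0 = 0 := by rw [hx0, hy0, sub_self]
    -- second block
    have h2 : ∀ t ∈ Icc (0:ℝ) T, (Q⁻¹ *ᵥ (x t - y t)) ∘ Sum.inr = 0 := by
      refine nilpotent_zero hN hT
        (fun t ht => hdw_proj Q⁻¹ Sum.inr (hwd t ht)) (fun t ht => ?_)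
      have := (hdec t ht).2
      simpa [Matrix.mulVec_zero] using this
    -- first block
    have h1 : ∀ t ∈ Icc (0:ℝ) T, (Q⁻¹ *ᵥ (x t - y t)) ∘ Sum.inl = 0 := by
      refine linear_ode_zero J hT
        (fun t ht => hdw_proj Q⁻¹ Sum.inl (hwd t ht)) (fun t ht => ?_) ?_
      · have := (hdec t ht).1
        simpa [Matrix.mulVec_zero] using this
      · rw [hw0, Matrix.mulVec_zero]; rfl
    intro t ht
    have hQw : Q⁻¹ *ᵥ (x t - y t) = 0 := by
      funext i
      cases i with
      | inl i => exact congrFun (h1 t ht) i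
      | inr i => exact congrFun (h2 t ht) i
    have hw : x t - y t = 0 := by
      have := congrArg (fun v => Q *ᵥ v) hQw
      simpa [Matrix.mulVec_mulVec, hQ1', Matrix.one_mulVec, Matrix.mulVec_zero] using this
    exact sub_eq_zero.mp hw
end
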